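/- Let H be a class in Pic_r and σ an element of the Weyl group W_r. If both H and σ(H) are E-standard, then σ(H) = H. Equivalently: if a standard class H can be written in E-standard form dE_0 − m_1E_1 − ⋯ − m_rE_r, then the sequence (d, m_1, …, m_r) is unique, independent of the Weyl group element used to bring H to E-standard form. -/

import Mathlib

open Finset

/-- The intersection form on `Pic_r = ℤ^{r+1}`: the symmetric bilinear form with
`E_0·E_0 = 1`, `E_i·E_i = -1` for `1 ≤ i ≤ r`, and `E_i·E_j = 0` for `i ≠ j`. -/
def inter {r : ℕ} (x y : Fin (r + 1) → ℤ) : ℤ :=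
  2 * (x 0 * y 0) - ∑ i, x i * y i

/-- The standard basis class `E_i` of `Pic_r`. -/
def Eb (r : ℕ) (i : Fin (r + 1)) : Fin (r + 1) → ℤ :=
  fun j => if j = i then 1 else 0

/-- The canonical class `K = -3E_0 + E_1 + ⋯ + E_r`. -/
def Kc (r : ℕ) : Fin (r + 1) → ℤ :=
  fun j => if j = 0 then -3 else 1

/-- The roots `r_0 = E_0 - E_1 - E_2 - E_3` and `r_i = E_i - E_{i+1}` for `1 ≤ i ≤ r-1`. -/
def root (r : ℕ) (i : Fin r) : Fin (r + 1) → ℤ :=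
  if (i : ℕ) = 0 then Eb r 0 - Eb r 1 - Eb r 2 - Eb r 3
  else Eb r i.castSucc - Eb r i.succ

/-- The reflection `σ_v(x) = x + (x·v) v` in the root `v`. -/
def reflect {r : ℕ} (v x : Fin (r + 1) → ℤ) : Fin (r + 1) → ℤ :=
  x + inter x v • v

/-- Membership in the Weyl group `W_r`: the group of transformations of `Pic_r`
generated by the reflections `σ_i(x) = x + (x·r_i) r_i`, `0 ≤ i ≤ r-1` (since each
generator is an involution, the submonoid generated coincides with the subgroup
generated). -/
def InWeyl (r : ℕ) (f : (Fin (r + 1) → ℤ) → (Fin (r + 1) → ℤ)) : Prop :=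
  f ∈ Submonoid.closure
    { g : Function.End (Fin (r + 1) → ℤ) | ∃ i : Fin r, g = reflect (root r i) }

/-- `H = dE_0 - m_1E_1 - ⋯ - m_rE_r` (so `d = H 0`, `m_i = -H i`) is E-standard:
`d ≥ m_1 ≥ ⋯ ≥ m_r ≥ 0`, `d ≥ m_1 + m_2` and `d ≥ m_1 + m_2 + m_3`. -/
def EStandard (r : ℕ) (H : Fin (r + 1) → ℤ) : Prop :=
  -H 1 ≤ H 0 ∧
  (∀ i j : Fin (r + 1), 1 ≤ (i : ℕ) → i ≤ j → -H j ≤ -H i) ∧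
  0 ≤ -H (Fin.last r) ∧
  -H 1 + -H 2 ≤ H 0 ∧
  -H 1 + -H 2 + -H 3 ≤ H 0

/-- `H = dE_0 - m_1E_1 - ⋯ - m_rE_r` is E-semi-standard: `d ≥ 0`,
`d ≥ m_1 ≥ ⋯ ≥ m_r` and `d ≥ m_1 + m_2 + m_3` (the `m_i` may be negative). -/
def ESemiStandard (r : ℕ) (H : Fin (r + 1) → ℤ) : Prop :=
  0 ≤ H 0 ∧
  -H 1 ≤ H 0 ∧
  (∀ i j : Fin (r + 1), 1 ≤ (i : ℕ) → i ≤ j → -H j ≤ -H i) ∧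
  -H 1 + -H 2 + -H 3 ≤ H 0

/-- A class is standard if its image under some element of `W_r` is E-standard. -/
def Standard (r : ℕ) (H : Fin (r + 1) → ℤ) : Prop :=
  ∃ f, InWeyl r f ∧ EStandard r (f H)

/-- A class is semi-standard if its image under some element of `W_r` is
E-semi-standard. -/
def SemiStandard (r : ℕ) (H : Fin (r + 1) → ℤ) : Prop :=
  ∃ f, InWeyl r f ∧ ESemiStandard r (f H)

/-- An exceptional class: an element of the `W_r`-orbit of `E_r`. -/
def Exceptional (r : ℕ) (x : Fin (r + 1) → ℤ) : Prop :=
  ∃ f, InWeyl r f ∧ x = f (Eb r (Fin.last r))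

/-- A line class: an element of the `W_r`-orbit of `E_0`. -/
def LineClass (r : ℕ) (x : Fin (r + 1) → ℤ) : Prop :=
  ∃ f, InWeyl r f ∧ x = f (Eb r 0)

/-- A pencil class: an element of the `W_r`-orbit of `E_0 - E_1`. -/
def PencilClass (r : ℕ) (x : Fin (r + 1) → ℤ) : Prop :=
  ∃ f, InWeyl r f ∧ x = f (Eb r 0 - Eb r 1)

/-- The elliptic generating class `C_i = 3E_0 - E_1 - ⋯ - E_i`. -/
def Cc (r : ℕ) (i : Fin (r + 1)) : Fin (r + 1) → ℤ :=
  fun j => if j = 0 then 3 else if j ≤ i then -1 else 0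

/-- The Euler characteristic `χ(H) = 1 + (H·H - H·K)/2`. -/
def chi (r : ℕ) (H : Fin (r + 1) → ℤ) : ℤ :=
  1 + (inter H H - inter H (Kc r)) / 2


namespace WeylAux

variable {r : ℕ}

lemma inter_comm (x y : Fin (r+1) → ℤ) : inter x y = inter y x := by
  simp [inter, mul_comm]

lemma inter_add_left (x y z : Fin (r+1) → ℤ) : inter (x + y) z = inter x z + inter y z := by
  simp [inter, add_mul, Finset.sum_add_distrib]; ring

lemma inter_add_right (x y z : Fin (r+1) → ℤ) : inter x (y + z) = inter x y + inter x z := by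
  rw [inter_comm, inter_add_left, inter_comm y x, inter_comm z x]

lemma inter_sub_left (x y z : Fin (r+1) → ℤ) : inter (x - y) z = inter x z - inter y z := by
  simp [inter, sub_mul, Finset.sum_sub_distrib]; ring

lemma inter_sub_right (x y z : Fin (r+1) → ℤ) : inter x (y - z) = inter x y - inter x z := by
  rw [inter_comm, inter_sub_left, inter_comm y x, inter_comm z x]

lemma inter_smul_left (c : ℤ) (x z : Fin (r+1) → ℤ) : inter (c • x) z = c * inter x z := by
  simp only [inter, Pi.smul_apply, smul_eq_mul, mul_sub, Finset.mul_sum]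
  ring_nf

lemma inter_smul_right (c : ℤ) (x z : Fin (r+1) → ℤ) : inter x (c • z) = c * inter x z := by
  rw [inter_comm, inter_smul_left, inter_comm]

lemma inter_neg_right (x z : Fin (r+1) → ℤ) : inter x (-z) = - inter x z := by
  have := inter_smul_right (-1) x z; simpa using this

lemma inter_Eb_Eb (i j : Fin (r+1)) :
    inter (Eb r i) (Eb r j) = (if i = 0 ∧ j = 0 then 2 else 0) - (if i = j then 1 else 0) := by
  simp only [inter, Eb]
  rw [Finset.sum_congr rfl (g := fun k => if k = i then (if k = j then (1:ℤ) else 0) else 0)]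
  · rw [Finset.sum_ite_eq' Finset.univ i]
    simp only [Finset.mem_univ, if_true]
    split_ifs <;> first | rfl | omega | (exfalso; omega) | simp_all
  · intro k _; split_ifs <;> first | ring | simp_all

end WeylAux

namespace WeylAux2
open WeylAux

variable {r : ℕ}

lemma v0 : ((0 : Fin (r+1)) : ℕ) = 0 := rfl

lemma v1 (hr : 3 ≤ r) : ((1 : Fin (r+1)) : ℕ) = 1 := by
  simp [Fin.val_one', Nat.mod_eq_of_lt]; omega

lemma v2 (hr : 3 ≤ r) : ((2 : Fin (r+1)) : ℕ) = 2 := by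
  have h : ((2 : Fin (r+1)) : ℕ) = 2 % (r+1) := rfl
  rw [h, Nat.mod_eq_of_lt (by omega)]

lemma v3 (hr : 3 ≤ r) : ((3 : Fin (r+1)) : ℕ) = 3 := by
  have h : ((3 : Fin (r+1)) : ℕ) = 3 % (r+1) := rfl
  rw [h, Nat.mod_eq_of_lt (by omega)]

lemma inter_x_Eb (x : Fin (r+1) → ℤ) (j : Fin (r+1)) :
    inter x (Eb r j) = (if j = 0 then 2 * x 0 else 0) - x j := by
  simp only [inter, Eb]
  rw [Finset.sum_congr rfl (g := fun k => if k = j then x k else 0)]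
  · rw [Finset.sum_ite_eq' Finset.univ j]
    simp only [Finset.mem_univ, if_true]
    rcases eq_or_ne j 0 with h | h
    · subst h; simp
    · rw [if_neg h, if_neg (fun hh => h hh.symm)]; ring
  · intro k _; split_ifs <;> ring

lemma inter_Eb_x (x : Fin (r+1) → ℤ) (j : Fin (r+1)) :
    inter (Eb r j) x = (if j = 0 then 2 * x 0 else 0) - x j := by
  rw [inter_comm, inter_x_Eb]

end WeylAux2

namespace WeylAux3
open WeylAux WeylAux2

variable {r : ℕ}

lemma inter_x_root (hr : 3 ≤ r) (x : Fin (r+1) → ℤ) (i : Fin r) :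
    inter x (root r i) =
      if (i : ℕ) = 0 then x 0 + x 1 + x 2 + x 3 else x i.succ - x i.castSucc := by
  unfold root
  split_ifs with h
  · rw [inter_sub_right, inter_sub_right, inter_sub_right]
    rw [inter_x_Eb, inter_x_Eb, inter_x_Eb, inter_x_Eb]
    have h1 : (1 : Fin (r+1)) ≠ 0 := by rw [Ne, Fin.ext_iff, v1 hr, v0]; omega
    have h2 : (2 : Fin (r+1)) ≠ 0 := by rw [Ne, Fin.ext_iff, v2 hr, v0]; omega
    have h3 : (3 : Fin (r+1)) ≠ 0 := by rw [Ne, Fin.ext_iff, v3 hr, v0]; omega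
    rw [if_pos rfl, if_neg h1, if_neg h2, if_neg h3]; ring
  · rw [inter_sub_right, inter_x_Eb, inter_x_Eb]
    have hc : (i.castSucc : Fin (r+1)) ≠ 0 := by
      rw [Ne, Fin.ext_iff, Fin.coe_castSucc, v0]; exact h
    have hs : (i.succ : Fin (r+1)) ≠ 0 := Fin.succ_ne_zero i
    rw [if_neg hc, if_neg hs]; ring

lemma root_val (hr : 3 ≤ r) (i : Fin r) (k : Fin (r+1)) :
    root r i k =
      if (i : ℕ) = 0 then
        (if (k:ℕ) = 0 then 1 else if (k:ℕ) ≤ 3 then -1 else 0)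
      else (if (k:ℕ) = (i:ℕ) then 1 else if (k:ℕ) = (i:ℕ)+1 then -1 else 0) := by
  have e0 : ∀ k : Fin (r+1), (k = (0:Fin (r+1))) ↔ (k:ℕ) = 0 := by
    intro k; rw [Fin.ext_iff, v0]
  have e1 : ∀ k : Fin (r+1), (k = (1:Fin (r+1))) ↔ (k:ℕ) = 1 := by
    intro k; rw [Fin.ext_iff, v1 hr]
  have e2 : ∀ k : Fin (r+1), (k = (2:Fin (r+1))) ↔ (k:ℕ) = 2 := by
    intro k; rw [Fin.ext_iff, v2 hr]
  have e3 : ∀ k : Fin (r+1), (k = (3:Fin (r+1))) ↔ (k:ℕ) = 3 := by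
    intro k; rw [Fin.ext_iff, v3 hr]
  have ec : ∀ k : Fin (r+1), (k = i.castSucc) ↔ (k:ℕ) = (i:ℕ) := by
    intro k; rw [Fin.ext_iff, Fin.coe_castSucc]
  have es : ∀ k : Fin (r+1), (k = i.succ) ↔ (k:ℕ) = (i:ℕ)+1 := by
    intro k; rw [Fin.ext_iff, Fin.val_succ]
  unfold root
  by_cases h : (i:ℕ) = 0
  · simp only [if_pos h, Pi.sub_apply, Eb, e0, e1, e2, e3]
    split_ifs <;> first | omega | exact (‹False›).elim
  · simp only [if_neg h, Pi.sub_apply, Eb, ec, es]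
    split_ifs <;> first | omega | exact (‹False›).elim

lemma inter_root_self (hr : 3 ≤ r) (i : Fin r) :
    inter (root r i) (root r i) = -2 := by
  have hlt := i.isLt
  rw [inter_x_root hr]
  split_ifs with h
  · rw [root_val hr, root_val hr, root_val hr, root_val hr, v0, v1 hr, v2 hr, v3 hr]
    split_ifs <;> first | omega | exact (‹False›).elim
  · rw [root_val hr, root_val hr, Fin.val_succ, Fin.coe_castSucc]
    split_ifs <;> first | omega | exact (‹False›).elim

lemma inter_root_root (hr : 3 ≤ r) {i j : Fin r} (hij : i ≠ j) :
    inter (root r i) (root r j) = 0 ∨ inter (root r i) (root r j) = 1 := by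
  have hv : (i : ℕ) ≠ (j : ℕ) := fun hh => hij (Fin.ext hh)
  have hlti := i.isLt
  have hltj := j.isLt
  rw [inter_x_root hr]
  split_ifs with h
  · rw [root_val hr, root_val hr, root_val hr, root_val hr, v0, v1 hr, v2 hr, v3 hr]
    split_ifs <;> first | omega | exact (‹False›).elim
  · rw [root_val hr, root_val hr, Fin.val_succ, Fin.coe_castSucc]
    split_ifs <;> first | omega | exact (‹False›).elim

end WeylAux3

namespace WeylAux4
open WeylAux WeylAux2 WeylAux3

variable {r : ℕ}

/-- the generator -/
def Sg (r : ℕ) (i : Fin r) : Function.End (Fin (r+1) → ℤ) := reflect (root r i)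

lemma end_mul_apply (f g : Function.End (Fin (r+1) → ℤ)) (x : Fin (r+1) → ℤ) :
    (f * g) x = f (g x) := rfl

lemma end_one_apply (x : Fin (r+1) → ℤ) : (1 : Function.End (Fin (r+1) → ℤ)) x = x := rfl

lemma reflect_apply (v x : Fin (r+1) → ℤ) : reflect v x = x + inter x v • v := rfl

lemma reflect_add (v x y : Fin (r+1) → ℤ) :
    reflect v (x + y) = reflect v x + reflect v y := by
  simp only [reflect_apply, inter_add_left, add_smul]; abel

lemma reflect_smul (v : Fin (r+1) → ℤ) (c : ℤ) (x : Fin (r+1) → ℤ) :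
    reflect v (c • x) = c • reflect v x := by
  simp only [reflect_apply, inter_smul_left, smul_add, mul_smul]

lemma reflect_neg (v x : Fin (r+1) → ℤ) : reflect v (-x) = - reflect v x := by
  have := reflect_smul v (-1) x; simpa using this

lemma reflect_inter (v x y : Fin (r+1) → ℤ) (hv : inter v v = -2) :
    inter (reflect v x) (reflect v y) = inter x y := by
  simp only [reflect_apply, inter_add_left, inter_add_right, inter_smul_left,
    inter_smul_right, hv]
  rw [inter_comm v y]
  ring

lemma reflect_invol (v : Fin (r+1) → ℤ) (hv : inter v v = -2) (x : Fin (r+1) → ℤ) :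
    reflect v (reflect v x) = x := by
  simp only [reflect_apply, inter_add_left, inter_smul_left, hv]
  module

lemma reflect_fix (v x : Fin (r+1) → ℤ) (hx : inter x v = 0) : reflect v x = x := by
  simp [reflect_apply, hx]

lemma reflect_self_neg (v : Fin (r+1) → ℤ) (hv : inter v v = -2) : reflect v v = -v := by
  simp only [reflect_apply, hv]; module

lemma reflect_conj (v u : Fin (r+1) → ℤ) (hv : inter v v = -2) (x : Fin (r+1) → ℤ) :
    reflect v (reflect u (reflect v x)) = reflect (reflect v u) x := by
  have key : inter (reflect v x) u = inter x (reflect v u) := by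
    conv_lhs => rw [← reflect_invol v hv u]
    rw [reflect_inter v _ _ hv]
  simp only [reflect_apply (reflect v u) x]
  rw [reflect_apply u (reflect v x), reflect_add, reflect_smul, reflect_invol v hv x, key]

/-- word product -/
def prodW (r : ℕ) (l : List (Fin r)) : Function.End (Fin (r+1) → ℤ) := (l.map (Sg r)).prod

lemma prodW_nil : prodW r [] = 1 := rfl

lemma prodW_cons (a : Fin r) (l : List (Fin r)) :
    prodW r (a :: l) = Sg r a * prodW r l := by
  simp [prodW]

lemma prodW_append (l l' : List (Fin r)) :
    prodW r (l ++ l') = prodW r l * prodW r l' := by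
  simp [prodW]

lemma prodW_singleton (a : Fin r) : prodW r [a] = Sg r a := by
  simp [prodW]

lemma inWeyl_iff (f : (Fin (r+1) → ℤ) → (Fin (r+1) → ℤ)) :
    InWeyl r f ↔ ∃ l : List (Fin r), prodW r l = f := by
  constructor
  · intro h
    have h' : f ∈ Submonoid.closure
        {g : Function.End (Fin (r+1) → ℤ) | ∃ i : Fin r, g = reflect (root r i)} := h
    clear h
    induction h' using Submonoid.closure_induction with
    | mem g hg => rcases hg with ⟨i, rfl⟩; exact ⟨[i], prodW_singleton i⟩
    | one => exact ⟨[], rfl⟩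
    | mul g g' _ _ ih ih' =>
      rcases ih with ⟨l, rfl⟩; rcases ih' with ⟨l', rfl⟩
      exact ⟨l ++ l', prodW_append l l'⟩
  · rintro ⟨l, rfl⟩
    refine Submonoid.list_prod_mem (M := Function.End (Fin (r+1) → ℤ)) _ ?_
    intro x hx
    rcases List.mem_map.1 hx with ⟨i, _, rfl⟩
    exact Submonoid.subset_closure ⟨i, rfl⟩

lemma prodW_add (l : List (Fin r)) (x y : Fin (r+1) → ℤ) :
    prodW r l (x + y) = prodW r l x + prodW r l y := by
  induction l with
  | nil => rfl
  | cons a l ih => rw [prodW_cons]; simp only [end_mul_apply, ih]; exact reflect_add _ _ _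

lemma prodW_smul (l : List (Fin r)) (c : ℤ) (x : Fin (r+1) → ℤ) :
    prodW r l (c • x) = c • prodW r l x := by
  induction l with
  | nil => rfl
  | cons a l ih => rw [prodW_cons]; simp only [end_mul_apply, ih]; exact reflect_smul _ _ _

lemma prodW_neg (l : List (Fin r)) (x : Fin (r+1) → ℤ) :
    prodW r l (-x) = - prodW r l x := by
  have := prodW_smul l (-1) x; simpa using this

lemma prodW_inter (hr : 3 ≤ r) (l : List (Fin r)) (x y : Fin (r+1) → ℤ) :
    inter (prodW r l x) (prodW r l y) = inter x y := by
  induction l with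
  | nil => rfl
  | cons a l ih =>
    rw [prodW_cons]
    simp only [end_mul_apply]; simp only [Sg]
    rw [reflect_inter _ _ _ (inter_root_self hr a), ih]

end WeylAux4

namespace WeylAux5
open WeylAux WeylAux2 WeylAux3 WeylAux4

variable {r : ℕ}

noncomputable def ell (r : ℕ) (f : Function.End (Fin (r+1) → ℤ)) : ℕ :=
  sInf {n | ∃ l : List (Fin r), prodW r l = f ∧ l.length = n}

lemma ell_le {f : Function.End (Fin (r+1) → ℤ)} {l : List (Fin r)}
    (hl : prodW r l = f) : ell r f ≤ l.length :=
  Nat.sInf_le ⟨l, hl, rfl⟩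

lemma ell_spec {f : Function.End (Fin (r+1) → ℤ)} (h : InWeyl r f) :
    ∃ l : List (Fin r), prodW r l = f ∧ l.length = ell r f := by
  have hne : {n | ∃ l : List (Fin r), prodW r l = f ∧ l.length = n}.Nonempty := by
    rcases (inWeyl_iff f).1 h with ⟨l, hl⟩
    exact ⟨l.length, l, hl, rfl⟩
  exact Nat.sInf_mem hne

lemma inWeyl_one : InWeyl r (1 : Function.End (Fin (r+1) → ℤ)) :=
  (inWeyl_iff _).2 ⟨[], rfl⟩

lemma inWeyl_Sg (i : Fin r) : InWeyl r (Sg r i) :=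
  (inWeyl_iff _).2 ⟨[i], prodW_singleton i⟩

lemma inWeyl_mul {f g : Function.End (Fin (r+1) → ℤ)}
    (hf : InWeyl r f) (hg : InWeyl r g) : InWeyl r (f * g) := by
  rcases (inWeyl_iff f).1 hf with ⟨l, rfl⟩
  rcases (inWeyl_iff g).1 hg with ⟨l', rfl⟩
  exact (inWeyl_iff _).2 ⟨l ++ l', prodW_append l l'⟩

lemma ell_eq_zero {f : Function.End (Fin (r+1) → ℤ)} (h : InWeyl r f)
    (h0 : ell r f = 0) : f = 1 := by
  rcases ell_spec h with ⟨l, hl, hlen⟩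
  rw [h0] at hlen
  rw [List.length_eq_zero_iff] at hlen
  rw [hlen] at hl
  exact hl.symm

lemma ell_mul_le {f g : Function.End (Fin (r+1) → ℤ)}
    (hf : InWeyl r f) (hg : InWeyl r g) : ell r (f * g) ≤ ell r f + ell r g := by
  rcases ell_spec hf with ⟨l, hl, hlen⟩
  rcases ell_spec hg with ⟨l', hl', hlen'⟩
  have : prodW r (l ++ l') = f * g := by rw [prodW_append, hl, hl']
  calc ell r (f * g) ≤ (l ++ l').length := ell_le this
    _ = ell r f + ell r g := by rw [List.length_append, hlen, hlen']

lemma Sg_invol (hr : 3 ≤ r) (i : Fin r) : Sg r i * Sg r i = 1 := by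
  funext x
  exact reflect_invol _ (inter_root_self hr i) x

lemma ell_mul_Sg_le (hr : 3 ≤ r) {f : Function.End (Fin (r+1) → ℤ)}
    (hf : InWeyl r f) (i : Fin r) : ell r (f * Sg r i) ≤ ell r f + 1 := by
  have := ell_mul_le hf (inWeyl_Sg i)
  calc ell r (f * Sg r i) ≤ ell r f + ell r (Sg r i) := this
    _ ≤ ell r f + 1 := by
        have : ell r (Sg r i) ≤ 1 := ell_le (prodW_singleton i)
        omega

lemma descent (hr : 3 ≤ r) :
    ∀ n (w : Function.End (Fin (r+1) → ℤ)), InWeyl r w → ell r w = n → ∀ i j : Fin r,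
    ∃ (v : Function.End (Fin (r+1) → ℤ)) (l : List (Fin r)),
      InWeyl r v ∧ (∀ k ∈ l, k = i ∨ k = j) ∧ w = v * prodW r l ∧
      ell r v + l.length ≤ n ∧ ell r v ≤ ell r (v * Sg r i) ∧ ell r v ≤ ell r (v * Sg r j) := by
  intro n
  induction n using Nat.strong_induction_on with
  | _ n IH =>
    intro w hw hn i j
    by_cases hi : ell r (w * Sg r i) < ell r w
    · set w' := w * Sg r i with hw'
      have hw'W : InWeyl r w' := inWeyl_mul hw (inWeyl_Sg i)
      have hlt : ell r w' < n := hn ▸ hi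
      rcases IH (ell r w') hlt w' hw'W rfl i j with ⟨v, l, hvW, hent, heq, hlen, hvi, hvj⟩
      refine ⟨v, l ++ [i], hvW, ?_, ?_, ?_, hvi, hvj⟩
      · intro k hk
        rcases List.mem_append.1 hk with h | h
        · exact hent k h
        · left; simpa using h
      · have : w = w' * Sg r i := by
          rw [hw', mul_assoc, Sg_invol hr, mul_one]
        rw [this, heq, mul_assoc, prodW_append, prodW_singleton]
      · simp only [List.length_append, List.length_singleton]
        omega
    · by_cases hj : ell r (w * Sg r j) < ell r w
      · set w' := w * Sg r j with hw'
        have hw'W : InWeyl r w' := inWeyl_mul hw (inWeyl_Sg j)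
        have hlt : ell r w' < n := hn ▸ hj
        rcases IH (ell r w') hlt w' hw'W rfl i j with ⟨v, l, hvW, hent, heq, hlen, hvi, hvj⟩
        refine ⟨v, l ++ [j], hvW, ?_, ?_, ?_, hvi, hvj⟩
        · intro k hk
          rcases List.mem_append.1 hk with h | h
          · exact hent k h
          · right; simpa using h
        · have : w = w' * Sg r j := by
            rw [hw', mul_assoc, Sg_invol hr, mul_one]
          rw [this, heq, mul_assoc, prodW_append, prodW_singleton]
        · simp only [List.length_append, List.length_singleton]
          omega
      · exact ⟨w, [], hw, by simp, by simp [prodW_nil], by simp [hn], by omega, by omega⟩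

end WeylAux5

namespace WeylAux6
open WeylAux WeylAux2 WeylAux3 WeylAux4 WeylAux5

variable {r : ℕ}

lemma Sg_apply (k : Fin r) (x : Fin (r+1) → ℤ) :
    Sg r k x = x + inter x (root r k) • root r k := rfl

lemma Sg_root_self (hr : 3 ≤ r) (i : Fin r) : Sg r i (root r i) = - root r i :=
  reflect_self_neg _ (inter_root_self hr i)

def Rf (u : Fin (r+1) → ℤ) : Function.End (Fin (r+1) → ℤ) := reflect u

lemma conj_formula (hr : 3 ≤ r) (i : Fin r) (u : Fin (r+1) → ℤ) :
    Sg r i * Rf u * Sg r i = Rf (reflect (root r i) u) := by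
  funext x
  have := reflect_conj (root r i) u (inter_root_self hr i) x
  exact this

lemma conj0 (hr : 3 ≤ r) {i j : Fin r}
    (hc : inter (root r i) (root r j) = 0) :
    Sg r i * Sg r j * Sg r i = Sg r j := by
  have h := conj_formula hr i (root r j)
  rw [show reflect (root r i) (root r j) = root r j by
    rw [reflect_apply, inter_comm, hc, zero_smul, add_zero]] at h
  exact h.trans rfl

lemma braid1 (hr : 3 ≤ r) {i j : Fin r}
    (hc : inter (root r i) (root r j) = 1) :
    Sg r i * Sg r j * Sg r i = Sg r j * Sg r i * Sg r j := by
  have hc' : inter (root r j) (root r i) = 1 := by rw [inter_comm]; exact hc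
  have h1 := conj_formula hr i (root r j)
  rw [show reflect (root r i) (root r j) = root r j + root r i by
    rw [reflect_apply, inter_comm, hc, one_smul]] at h1
  have h2 := conj_formula hr j (root r i)
  rw [show reflect (root r j) (root r i) = root r i + root r j by
    rw [reflect_apply, inter_comm, hc', one_smul]] at h2
  rw [show Sg r i * Sg r j * Sg r i = Sg r i * Rf (root r j) * Sg r i from rfl,
    show Sg r j * Sg r i * Sg r j = Sg r j * Rf (root r i) * Sg r j from rfl, h1, h2]
  exact congrArg Rf (add_comm _ _)

lemma p2 (a b : Fin r) : prodW r [a, b] = Sg r a * Sg r b := by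
  simp [prodW]

lemma p3 (a b c : Fin r) : prodW r [a, b, c] = Sg r a * (Sg r b * Sg r c) := by
  simp [prodW, mul_assoc]

/-- Normal form in the dihedral submonoid generated by `Sg i, Sg j`. -/
lemma nf (hr : 3 ≤ r) (i j : Fin r) (hij : i ≠ j) :
    ∀ l : List (Fin r), (∀ k ∈ l, k = i ∨ k = j) →
    ∃ l' : List (Fin r),
      (l' = [] ∨ l' = [i] ∨ l' = [j] ∨ l' = [i,j] ∨ l' = [j,i] ∨ l' = [i,j,i]) ∧
      prodW r l' = prodW r l ∧ l'.length ≤ l.length := by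
  have hII : ∀ x, Sg r i * (Sg r i * x) = x := fun x => by
    rw [← mul_assoc, Sg_invol hr, one_mul]
  have hJJ : ∀ x, Sg r j * (Sg r j * x) = x := fun x => by
    rw [← mul_assoc, Sg_invol hr, one_mul]
  intro l
  induction l with
  | nil => exact fun _ => ⟨[], Or.inl rfl, rfl, le_refl _⟩
  | cons a l IH =>
    intro hent
    have hal : ∀ k ∈ l, k = i ∨ k = j := fun k hk => hent k (List.mem_cons_of_mem a hk)
    rcases IH hal with ⟨l', hcan, hprod, hlen⟩
    have ha : a = i ∨ a = j := hent a List.mem_cons_self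
    have hcons : prodW r (a :: l) = Sg r a * prodW r l' := by
      rw [prodW_cons, hprod]
    have hlen' : ∀ l₃ : List (Fin r), l₃.length ≤ l'.length + 1 →
        l₃.length ≤ (a :: l).length := by
      intro l₃ h3
      simp only [List.length_cons]
      omega
    rcases inter_root_root hr hij with hc | hc
    -- c = 0
    · have hISI : Sg r i * (Sg r j * Sg r i) = Sg r j := by
        rw [← mul_assoc]; exact conj0 hr hc
      have hJSJ : Sg r j * (Sg r i * Sg r j) = Sg r i := by
        rw [← mul_assoc]; exact conj0 hr (by rw [WeylAux.inter_comm]; exact hc)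
      rcases ha with rfl | rfl <;> rcases hcan with rfl | rfl | rfl | rfl | rfl | rfl
      · exact ⟨[a], Or.inr (Or.inl rfl),
          by rw [hcons, prodW_singleton, prodW_nil, mul_one], hlen' _ (by simp)⟩
      · exact ⟨[], Or.inl rfl,
          by rw [hcons, prodW_singleton, Sg_invol hr, prodW_nil], hlen' _ (by simp)⟩
      · exact ⟨[a, j], Or.inr (Or.inr (Or.inr (Or.inl rfl))),
          by rw [hcons, p2, prodW_singleton], hlen' _ (by simp)⟩
      · exact ⟨[j], Or.inr (Or.inr (Or.inl rfl)),
          by rw [hcons, p2, prodW_singleton, hII], hlen' _ (by simp)⟩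
      · exact ⟨[j], Or.inr (Or.inr (Or.inl rfl)),
          by rw [hcons, p2, prodW_singleton, hISI], hlen' _ (by simp)⟩
      · exact ⟨[j, a], Or.inr (Or.inr (Or.inr (Or.inr (Or.inl rfl)))),
          by rw [hcons, p3, p2, hII], hlen' _ (by simp)⟩
      · exact ⟨[a], Or.inr (Or.inr (Or.inl rfl)),
          by rw [hcons, prodW_singleton, prodW_nil, mul_one], hlen' _ (by simp)⟩
      · exact ⟨[a, i], Or.inr (Or.inr (Or.inr (Or.inr (Or.inl rfl)))),
          by rw [hcons, p2, prodW_singleton], hlen' _ (by simp)⟩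
      · exact ⟨[], Or.inl rfl,
          by rw [hcons, prodW_singleton, Sg_invol hr, prodW_nil], hlen' _ (by simp)⟩
      · exact ⟨[i], Or.inr (Or.inl rfl),
          by rw [hcons, p2, prodW_singleton, hJSJ], hlen' _ (by simp)⟩
      · exact ⟨[i], Or.inr (Or.inl rfl),
          by rw [hcons, p2, prodW_singleton, hJJ], hlen' _ (by simp)⟩
      · exact ⟨[], Or.inl rfl,
          by rw [hcons, p3, hISI, Sg_invol hr, prodW_nil], hlen' _ (by simp)⟩
    -- c = 1
    · have hB : Sg r i * (Sg r j * Sg r i) = Sg r j * (Sg r i * Sg r j) := by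
        rw [← mul_assoc, ← mul_assoc]; exact braid1 hr hc
      rcases ha with rfl | rfl <;> rcases hcan with rfl | rfl | rfl | rfl | rfl | rfl
      · exact ⟨[a], Or.inr (Or.inl rfl),
          by rw [hcons, prodW_singleton, prodW_nil, mul_one], hlen' _ (by simp)⟩
      · exact ⟨[], Or.inl rfl,
          by rw [hcons, prodW_singleton, Sg_invol hr, prodW_nil], hlen' _ (by simp)⟩
      · exact ⟨[a, j], Or.inr (Or.inr (Or.inr (Or.inl rfl))),
          by rw [hcons, p2, prodW_singleton], hlen' _ (by simp)⟩
      · exact ⟨[j], Or.inr (Or.inr (Or.inl rfl)),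
          by rw [hcons, p2, prodW_singleton, hII], hlen' _ (by simp)⟩
      · exact ⟨[a, j, a], Or.inr (Or.inr (Or.inr (Or.inr (Or.inr rfl)))),
          by rw [hcons, p3, p2], hlen' _ (by simp)⟩
      · exact ⟨[j, a], Or.inr (Or.inr (Or.inr (Or.inr (Or.inl rfl)))),
          by rw [hcons, p3, p2, hII], hlen' _ (by simp)⟩
      · exact ⟨[a], Or.inr (Or.inr (Or.inl rfl)),
          by rw [hcons, prodW_singleton, prodW_nil, mul_one], hlen' _ (by simp)⟩
      · exact ⟨[a, i], Or.inr (Or.inr (Or.inr (Or.inr (Or.inl rfl)))),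
          by rw [hcons, p2, prodW_singleton], hlen' _ (by simp)⟩
      · exact ⟨[], Or.inl rfl,
          by rw [hcons, prodW_singleton, Sg_invol hr, prodW_nil], hlen' _ (by simp)⟩
      · exact ⟨[i, a, i], Or.inr (Or.inr (Or.inr (Or.inr (Or.inr rfl)))),
          by rw [hcons, p3, p2, ← hB], hlen' _ (by simp)⟩
      · exact ⟨[i], Or.inr (Or.inl rfl),
          by rw [hcons, p2, prodW_singleton, hJJ], hlen' _ (by simp)⟩
      · exact ⟨[i, a], Or.inr (Or.inr (Or.inr (Or.inl rfl))),
          by rw [hcons, p3, hB, hJJ, p2], hlen' _ (by simp)⟩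
  
end WeylAux6

namespace WeylAux7
open WeylAux WeylAux2 WeylAux3 WeylAux4 WeylAux5 WeylAux6

variable {r : ℕ}

def Pos (r : ℕ) (x : Fin (r+1) → ℤ) : Prop :=
  x ∈ AddSubmonoid.closure (Set.range (root r))

lemma pos_root (i : Fin r) : Pos r (root r i) :=
  AddSubmonoid.subset_closure ⟨i, rfl⟩

lemma pos_add {x y : Fin (r+1) → ℤ} (hx : Pos r x) (hy : Pos r y) : Pos r (x + y) :=
  AddSubmonoid.add_mem _ hx hy

lemma pos_smul (a : ℤ) (ha : 0 ≤ a) {x : Fin (r+1) → ℤ} (hx : Pos r x) : Pos r (a • x) := by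
  lift a to ℕ using ha
  rw [natCast_zsmul]
  exact AddSubmonoid.nsmul_mem _ hx a

lemma inter_zero_right (μ : Fin (r+1) → ℤ) : inter μ 0 = 0 := by
  simp [inter]

lemma pos_inter {μ : Fin (r+1) → ℤ} (hdom : ∀ i : Fin r, 0 ≤ inter μ (root r i))
    {x : Fin (r+1) → ℤ} (hx : Pos r x) : 0 ≤ inter μ x := by
  induction hx using AddSubmonoid.closure_induction with
  | mem y hy => rcases hy with ⟨i, rfl⟩; exact hdom i
  | zero => rw [inter_zero_right]
  | add y z _ _ ihy ihz => rw [inter_add_right]; omega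

lemma inWeyl_add {w : Function.End (Fin (r+1) → ℤ)} (hw : InWeyl r w)
    (x y : Fin (r+1) → ℤ) : w (x + y) = w x + w y := by
  rcases (inWeyl_iff w).1 hw with ⟨l, rfl⟩; exact prodW_add l x y

lemma inWeyl_smul {w : Function.End (Fin (r+1) → ℤ)} (hw : InWeyl r w)
    (c : ℤ) (x : Fin (r+1) → ℤ) : w (c • x) = c • w x := by
  rcases (inWeyl_iff w).1 hw with ⟨l, rfl⟩; exact prodW_smul l c x

lemma inWeyl_neg {w : Function.End (Fin (r+1) → ℤ)} (hw : InWeyl r w)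
    (x : Fin (r+1) → ℤ) : w (-x) = - w x := by
  rcases (inWeyl_iff w).1 hw with ⟨l, rfl⟩; exact prodW_neg l x

lemma inWeyl_inter (hr : 3 ≤ r) {w : Function.End (Fin (r+1) → ℤ)} (hw : InWeyl r w)
    (x y : Fin (r+1) → ℤ) : inter (w x) (w y) = inter x y := by
  rcases (inWeyl_iff w).1 hw with ⟨l, rfl⟩; exact prodW_inter hr l x y

lemma Sg_root (k m : Fin r) :
    Sg r k (root r m) = root r m + inter (root r m) (root r k) • root r k := rfl

lemma Sg_add (k : Fin r) (x y : Fin (r+1) → ℤ) :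
    Sg r k (x + y) = Sg r k x + Sg r k y := reflect_add _ _ _

lemma Sg_smul' (k : Fin r) (c : ℤ) (x : Fin (r+1) → ℤ) :
    Sg r k (c • x) = c • Sg r k x := reflect_smul _ _ _

lemma Sg_neg (k : Fin r) (x : Fin (r+1) → ℤ) :
    Sg r k (-x) = - Sg r k x := reflect_neg _ _

-- images of `root i` under the canonical dihedral words
lemma im_j (hr : 3 ≤ r) {i j : Fin r} {c : ℤ} (hc : inter (root r i) (root r j) = c) :
    prodW r [j] (root r i) = root r i + c • root r j := by
  rw [prodW_singleton, Sg_root, hc]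

lemma im_ij (hr : 3 ≤ r) {i j : Fin r} {c : ℤ} (hc : inter (root r i) (root r j) = c) :
    prodW r [i, j] (root r i) = (c * c - 1) • root r i + c • root r j := by
  have hc' : inter (root r j) (root r i) = c := by rw [inter_comm]; exact hc
  have h1 : prodW r [i, j] (root r i) = Sg r i (Sg r j (root r i)) := by rw [p2]; rfl
  rw [h1, Sg_root, hc, Sg_add, Sg_smul', Sg_root, Sg_root, hc', inter_root_self hr]
  module

lemma im_iji (hr : 3 ≤ r) {i j : Fin r} {c : ℤ} (hc : inter (root r i) (root r j) = c) :
    prodW r [i, j, i] (root r i) = (1 - c * c) • root r i + (-c) • root r j := by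
  have hc' : inter (root r j) (root r i) = c := by rw [inter_comm]; exact hc
  have h1 : prodW r [i, j, i] (root r i) = Sg r i (Sg r j (Sg r i (root r i))) := by
    rw [p3]; rfl
  rw [h1, Sg_root_self hr, Sg_neg, Sg_root, hc, Sg_neg, Sg_add, Sg_smul',
    Sg_root_self hr, Sg_root, hc']
  module

lemma key (hr : 3 ≤ r) : ∀ n (w : Function.End (Fin (r+1) → ℤ)), InWeyl r w → ell r w = n →
    ∀ i : Fin r, ell r w ≤ ell r (w * Sg r i) → Pos r (w (root r i)) := by
  intro n
  induction n using Nat.strong_induction_on with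
  | _ n IH =>
    intro w hw hn i hle
    rcases Nat.eq_zero_or_pos n with h0 | h0
    · have h1 : w = 1 := ell_eq_zero hw (by omega)
      have h2 : w (root r i) = root r i := by rw [h1]; rfl
      rw [h2]; exact pos_root i
    · rcases ell_spec hw with ⟨l, hl, hlen⟩
      have hlne : l ≠ [] := by
        intro h; rw [h] at hlen; simp at hlen; omega
      rcases List.eq_nil_or_concat l with rfl | ⟨l₁, j, rfl⟩
      · exact absurd rfl hlne
      simp only [List.concat_eq_append] at hl hlen
      have hwj : w * Sg r j = prodW r l₁ := by
        rw [← hl, prodW_append, prodW_singleton, mul_assoc, Sg_invol hr, mul_one]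
      have hlej : ell r (w * Sg r j) < n := by
        have h1 : ell r (prodW r l₁) ≤ l₁.length := ell_le rfl
        have h2 : (l₁ ++ [j]).length = n := by rw [hlen, hn]
        simp only [List.length_append, List.length_singleton] at h2
        rw [hwj]; omega
      have hij : i ≠ j := by
        intro h; rw [h] at hle; omega
      rcases descent hr n w hw hn i j with ⟨v, lu, hvW, hent, heq, hsum, hvi, hvj⟩
      have hluW : InWeyl r (prodW r lu) := (inWeyl_iff _).2 ⟨lu, rfl⟩
      have hwle : ell r w ≤ ell r v + lu.length := by
        rw [heq]
        refine le_trans (ell_mul_le hvW hluW) ?_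
        have := ell_le (rfl : prodW r lu = prodW r lu)
        omega
      have hm : ell r v + lu.length = n := le_antisymm hsum (by omega)
      have hmpos : lu ≠ [] := by
        intro h
        rw [h, prodW_nil, mul_one] at heq
        rw [h] at hm
        simp at hm
        rw [heq] at hlej
        omega
      have hvlt : ell r v < n := by
        have : 0 < lu.length := List.length_pos_iff.2 hmpos
        omega
      have hpi : Pos r (v (root r i)) := IH (ell r v) hvlt v hvW rfl i hvi
      have hpj : Pos r (v (root r j)) := IH (ell r v) hvlt v hvW rfl j hvj
      rcases nf hr i j hij lu hent with ⟨l', hcan, hprod, hlenle⟩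
      have heq' : w = v * prodW r l' := by rw [heq, hprod]
      have hl'W : InWeyl r (prodW r l') := (inWeyl_iff _).2 ⟨l', rfl⟩
      have hminl' : lu.length ≤ l'.length := by
        have h1 : ell r w ≤ ell r v + l'.length := by
          rw [heq']
          refine le_trans (ell_mul_le hvW hl'W) ?_
          have := ell_le (rfl : prodW r l' = prodW r l')
          omega
        omega
      have bcase : ∀ l'' : List (Fin r), prodW r l' * Sg r i = prodW r l'' →
          l''.length + 1 ≤ l'.length → False := by
        intro l'' hpe hlt
        have h1 : w * Sg r i = v * prodW r l'' := by rw [heq', mul_assoc, hpe]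
        have h2 : ell r (w * Sg r i) ≤ ell r v + l''.length := by
          rw [h1]
          refine le_trans (ell_mul_le hvW ((inWeyl_iff _).2 ⟨l'', rfl⟩)) ?_
          have := ell_le (rfl : prodW r l'' = prodW r l'')
          omega
        omega
      have acase : ∀ a b : ℤ, 0 ≤ a → 0 ≤ b →
          prodW r l' (root r i) = a • root r i + b • root r j → Pos r (w (root r i)) := by
        intro a b ha hb him
        have h1 : w (root r i) = v (prodW r l' (root r i)) := by rw [heq']; rfl
        rw [h1, him, inWeyl_add hvW, inWeyl_smul hvW, inWeyl_smul hvW]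
        exact pos_add (pos_smul a ha hpi) (pos_smul b hb hpj)
      rcases inter_root_root hr hij with hc | hc <;>
        rcases hcan with rfl | rfl | rfl | rfl | rfl | rfl
      · refine acase 1 0 (by omega) (by omega) ?_
        rw [prodW_nil]
        show root r i = _
        module
      · exact (bcase [] (by rw [prodW_singleton, prodW_nil]; exact Sg_invol hr i)
          (by simp)).elim
      · refine acase 1 0 (by omega) (by omega) ?_
        rw [im_j hr hc]; module
      · exact (bcase [j] (by rw [p2, prodW_singleton]; exact conj0 hr hc) (by simp)).elim
      · exact (bcase [j] (by rw [p2, prodW_singleton, mul_assoc, Sg_invol hr, mul_one])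
          (by simp)).elim
      · refine acase 1 0 (by omega) (by omega) ?_
        rw [im_iji hr hc]; module
      · refine acase 1 0 (by omega) (by omega) ?_
        rw [prodW_nil]
        show root r i = _
        module
      · exact (bcase [] (by rw [prodW_singleton, prodW_nil]; exact Sg_invol hr i)
          (by simp)).elim
      · refine acase 1 1 (by omega) (by omega) ?_
        rw [im_j hr hc]; module
      · refine acase 0 1 (by omega) (by omega) ?_
        rw [im_ij hr hc]; module
      · exact (bcase [j] (by rw [p2, prodW_singleton, mul_assoc, Sg_invol hr, mul_one])
          (by simp)).elim
      · exact (bcase [i, j] (by rw [p3, p2, mul_assoc, mul_assoc, Sg_invol hr, mul_one])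
          (by simp)).elim

end WeylAux7

namespace WeylAux8
open WeylAux WeylAux2 WeylAux3 WeylAux4 WeylAux5 WeylAux6 WeylAux7

variable {r : ℕ}

lemma dom_of_estandard (hr : 3 ≤ r) {H : Fin (r+1) → ℤ} (h : EStandard r H) :
    ∀ i : Fin r, 0 ≤ inter H (root r i) := by
  intro i
  rw [inter_x_root hr]
  obtain ⟨h1, h2, h3, h4, h5⟩ := h
  split_ifs with h0
  · omega
  · have hcv : ((i.castSucc : Fin (r+1)) : ℕ) = (i : ℕ) := Fin.coe_castSucc i
    have hsv : ((i.succ : Fin (r+1)) : ℕ) = (i : ℕ) + 1 := Fin.val_succ i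
    have hle : i.castSucc ≤ i.succ := by
      rw [Fin.le_def, hcv, hsv]; omega
    have := h2 i.castSucc i.succ (by rw [hcv]; omega) hle
    omega

lemma main (hr : 3 ≤ r) (H : Fin (r+1) → ℤ) (h1 : EStandard r H) :
    ∀ n (σ : Function.End (Fin (r+1) → ℤ)), InWeyl r σ → ell r σ = n →
    EStandard r (σ H) → σ H = H := by
  intro n
  induction n using Nat.strong_induction_on with
  | _ n IH =>
    intro σ hσ hn h2
    rcases Nat.eq_zero_or_pos n with h0 | h0
    · have : σ = 1 := ell_eq_zero hσ (by omega)
      rw [this]; rfl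
    · rcases ell_spec hσ with ⟨l, hl, hlen⟩
      have hlne : l ≠ [] := by
        intro h; rw [h] at hlen; simp at hlen; omega
      rcases List.eq_nil_or_concat l with rfl | ⟨l₁, j, rfl⟩
      · exact absurd rfl hlne
      simp only [List.concat_eq_append] at hl hlen
      set w' := σ * Sg r j with hw'def
      have hw'W : InWeyl r w' := inWeyl_mul hσ (inWeyl_Sg j)
      have hwj : w' = prodW r l₁ := by
        rw [hw'def, ← hl, prodW_append, prodW_singleton, mul_assoc, Sg_invol hr, mul_one]
      have hlej : ell r w' < n := by
        have hle1 : ell r (prodW r l₁) ≤ l₁.length := ell_le rfl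
        have hle2 : (l₁ ++ [j]).length = n := by rw [hlen, hn]
        simp only [List.length_append, List.length_singleton] at hle2
        rw [hwj]; omega
      have hback : w' * Sg r j = σ := by
        rw [hw'def, mul_assoc, Sg_invol hr, mul_one]
      have hup : ell r w' ≤ ell r (w' * Sg r j) := by
        rw [hback]; omega
      have hpos : Pos r (w' (root r j)) := key hr (ell r w') w' hw'W rfl j hup
      have hσroot : σ (root r j) = - w' (root r j) := by
        conv_lhs => rw [← hback]
        rw [end_mul_apply, Sg_root_self hr, inWeyl_neg hw'W]
      have hdom2 : ∀ i, 0 ≤ inter (σ H) (root r i) := dom_of_estandard hr h2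
      have hneg : inter H (root r j) ≤ 0 := by
        have e1 : inter H (root r j) = inter (σ H) (σ (root r j)) :=
          (inWeyl_inter hr hσ H (root r j)).symm
        rw [e1, hσroot, inter_neg_right]
        have := pos_inter hdom2 hpos
        omega
      have hzero : inter H (root r j) = 0 :=
        le_antisymm hneg (dom_of_estandard hr h1 j)
      have hfix : Sg r j H = H := by
        rw [Sg_apply, hzero, zero_smul, add_zero]
      have hw'H : w' H = σ H := by
        rw [hw'def, end_mul_apply, hfix]
      have hres : w' H = H :=
        IH (ell r w') hlej w' hw'W rfl (by rw [hw'H]; exact h2)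
      rw [← hw'H, hres]

end WeylAux8

/-- Let `H` be a class in `Pic_r` and `σ` an element of the Weyl group `W_r`. If both
`H` and `σ(H)` are E-standard, then `σ(H) = H`; i.e. the E-standard form of a
standard class is unique, independent of the Weyl group element used to attain it. -/
theorem estandard_form_unique (r : ℕ) (hr : 3 ≤ r) (H : Fin (r + 1) → ℤ)
    (σ : (Fin (r + 1) → ℤ) → (Fin (r + 1) → ℤ)) (hσ : InWeyl r σ)
    (h1 : EStandard r H) (h2 : EStandard r (σ H)) :
    σ H = H :=
  WeylAux8.main hr H h1 (WeylAux5.ell r σ) σ hσ rfl h2
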